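/- Assume that for every (t,ω) ∈ [0,T] × Ω there exists ω̂ ∈ 𝒜(t,ω) such that X_u(ω̂) < X_t(ω) for all u ∈ (t,T]. Then for every (t,ω) with σ*(ω) ≥ t, the stopping time σ* is optimal with respect to 𝒜(t,ω): ℛ(t,ω;σ*) ≤ ℛ(t,ω;τ) for every stopping time τ with τ(ω'') ≥ t for all ω'' ∈ 𝒜(t,ω). -/

import Mathlib

open Set

noncomputable section

namespace SellingRegret

/-- Running maximum `X*_t(ω) = sup_{s ∈ [0,t]} X_s(ω)`, where `X_s(ω) = ω s`. -/
def Mstar (ω : ℝ → ℝ) (t : ℝ) : ℝ :=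
  sSup (ω '' Set.Icc 0 t)

/-- `𝒜(t,ω)`: the trajectories in `Ω` agreeing with `ω` on `[0,t]`. -/
def Hist (Ω : Set (ℝ → ℝ)) (t : ℝ) (ω : ℝ → ℝ) : Set (ℝ → ℝ) :=
  {ω' ∈ Ω | ∀ s ∈ Set.Icc 0 t, ω' s = ω s}

/-- A stopping time: a map `τ : Ω → [0,T]` such that whenever `τ(ω) ≤ t` and
`ω'` agrees with `ω` on `[0,t]`, one has `τ(ω') = τ(ω)`. -/
def IsStoppingTime (T : ℝ) (Ω : Set (ℝ → ℝ)) (τ : (ℝ → ℝ) → ℝ) : Prop :=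
  (∀ ω ∈ Ω, τ ω ∈ Set.Icc 0 T) ∧
  ∀ ω ∈ Ω, ∀ t ∈ Set.Icc 0 T, τ ω ≤ t →
    ∀ ω' ∈ Ω, (∀ s ∈ Set.Icc 0 t, ω' s = ω s) → τ ω' = τ ω

/-- Estimated regret `R(t,ω;τ,ω') = max{X*_{τ(ω')}(ω') − X_{τ(ω')}(ω'), ψ(τ(ω'),ω')}`
(it depends only on `τ` and `ω'`). -/
def regret (ψ : ℝ → (ℝ → ℝ) → ℝ) (τ : (ℝ → ℝ) → ℝ) (ω' : ℝ → ℝ) : ℝ :=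
  max (Mstar ω' (τ ω') - ω' (τ ω')) (ψ (τ ω') ω')

/-- Worst-case estimated regret `ℛ(t,ω;τ) = sup_{ω' ∈ 𝒜(t,ω)} R(t,ω;τ,ω')`,
valued in `[0,∞]`. -/
def worstRegret (Ω : Set (ℝ → ℝ)) (ψ : ℝ → (ℝ → ℝ) → ℝ)
    (t : ℝ) (ω : ℝ → ℝ) (τ : (ℝ → ℝ) → ℝ) : ENNReal :=
  ⨆ ω' ∈ Hist Ω t ω, ENNReal.ofReal (regret ψ τ ω')

/-- `σ*(ω) = inf {s ∈ [0,T] : X*_s(ω) − X_s(ω) ≥ ψ(s,ω)}`. -/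
def sigmaStar (T : ℝ) (ψ : ℝ → (ℝ → ℝ) → ℝ) (ω : ℝ → ℝ) : ℝ :=
  sInf {s ∈ Set.Icc 0 T | ψ s ω ≤ Mstar ω s - ω s}

/-- `τ ∈ 𝒯_t(ω)`: `τ(ω') ≥ t` for all `ω' ∈ 𝒜(t,ω)`. -/
def Admissible (Ω : Set (ℝ → ℝ)) (t : ℝ) (ω : ℝ → ℝ) (τ : (ℝ → ℝ) → ℝ) : Prop :=
  ∀ ω' ∈ Hist Ω t ω, t ≤ τ ω'

/-- `σ` is optimal with respect to `𝒜(t,ω)`. -/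
def OptimalAt (T : ℝ) (Ω : Set (ℝ → ℝ)) (ψ : ℝ → (ℝ → ℝ) → ℝ)
    (t : ℝ) (ω : ℝ → ℝ) (σ : (ℝ → ℝ) → ℝ) : Prop :=
  IsStoppingTime T Ω σ ∧ Admissible Ω t ω σ ∧
  ∀ τ, IsStoppingTime T Ω τ → Admissible Ω t ω τ →
    worstRegret Ω ψ t ω σ ≤ worstRegret Ω ψ t ω τ

/-- `σ` is Pareto optimal with respect to `𝒜(t,ω)`. -/
def ParetoOptimalAt (T : ℝ) (Ω : Set (ℝ → ℝ)) (ψ : ℝ → (ℝ → ℝ) → ℝ)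
    (t : ℝ) (ω : ℝ → ℝ) (σ : (ℝ → ℝ) → ℝ) : Prop :=
  IsStoppingTime T Ω σ ∧ Admissible Ω t ω σ ∧
  ¬ ∃ τ, IsStoppingTime T Ω τ ∧ Admissible Ω t ω τ ∧
      (∀ ω' ∈ Hist Ω t ω, regret ψ τ ω' ≤ regret ψ σ ω') ∧
      ∃ ω'' ∈ Hist Ω t ω, regret ψ τ ω'' < regret ψ σ ω''

/-- `σ` is perfect: optimal and Pareto optimal with respect to `𝒜(t,ω)`
whenever it is admissible for `𝒜(t,ω)`. -/
def Perfect (T : ℝ) (Ω : Set (ℝ → ℝ)) (ψ : ℝ → (ℝ → ℝ) → ℝ)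
    (σ : (ℝ → ℝ) → ℝ) : Prop :=
  IsStoppingTime T Ω σ ∧
  ∀ t ∈ Set.Icc 0 T, ∀ ω ∈ Ω, Admissible Ω t ω σ →
    OptimalAt T Ω ψ t ω σ ∧ ParetoOptimalAt T Ω ψ t ω σ

/-- Conditions (A) and (B) of Theorem 2 for a stopping time `σ`. -/
def CondAB (T : ℝ) (Ω : Set (ℝ → ℝ)) (ψ : ℝ → (ℝ → ℝ) → ℝ)
    (σ : (ℝ → ℝ) → ℝ) : Prop :=
  ∀ τ, IsStoppingTime T Ω τ → ∀ ω ∈ Ω,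
    (σ ω < τ ω → ∃ ω' ∈ Hist Ω (σ ω) ω, regret ψ σ ω' < regret ψ τ ω') ∧
    (τ ω < σ ω → ∀ ω' ∈ Hist Ω (τ ω) ω, regret ψ σ ω' < regret ψ τ ω')

/-- `Ω = C([0,T],ℝ)`: all trajectories continuous on `[0,T]`. -/
def OmegaC (T : ℝ) : Set (ℝ → ℝ) :=
  {ω | ContinuousOn ω (Set.Icc 0 T)}

/-- The two-sided Lipschitz corridor of Example 2:
`−L₁(t−s) ≤ ω(t) − ω(s) ≤ L₂(t−s)` for `0 ≤ s ≤ t ≤ T`. -/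
def OmegaL (T L₁ L₂ : ℝ) : Set (ℝ → ℝ) :=
  {ω | ∀ s t : ℝ, 0 ≤ s → s ≤ t → t ≤ T →
    -L₁ * (t - s) ≤ ω t - ω s ∧ ω t - ω s ≤ L₂ * (t - s)}

/-!
Fix `ω' ∈ 𝒜(t,ω)`. Since `σ*` only reads the history, `σ*(ω') ≥ t`, and by continuity the
drawdown `X* − X` of `ω'` equals `ψ` at `σ*(ω')`, so `R(σ*, ω') = ψ(σ*(ω'), ω')`. If
`τ(ω') ≤ σ*(ω')`, then `ψ(τ(ω'), ω')` is already at least this. Otherwise let `ω̂` follow `ω'`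
up to `σ*(ω')` and stay strictly below `X_{σ*(ω')}(ω')` afterwards: `τ` cannot tell `ω̂` from
`ω'` before `σ*(ω')`, so it stops `ω̂` later, when its drawdown exceeds that of `ω'` at `σ*(ω')`.
Either way some path of `𝒜(t,ω)` has `τ`-regret at least `R(σ*, ω')`.
-/

section RunningMax

variable {T : ℝ} {ω ω' : ℝ → ℝ} {s r : ℝ}

lemma Mstar_congr (h : EqOn ω' ω (Icc 0 s)) : Mstar ω' s = Mstar ω s := by
  rw [Mstar, Mstar, h.image_eq]

lemma Mstar_zero : Mstar ω 0 = ω 0 := by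
  rw [Mstar, Icc_self, image_singleton, csSup_singleton]

lemma le_Mstar (hω : ContinuousOn ω (Icc 0 T)) (hsT : s ≤ T) {u : ℝ} (hu : u ∈ Icc 0 s) :
    ω u ≤ Mstar ω s :=
  le_csSup (isCompact_Icc.bddAbove_image (hω.mono (Icc_subset_Icc le_rfl hsT))) ⟨u, hu, rfl⟩

lemma Mstar_mono (hω : ContinuousOn ω (Icc 0 T)) (hs : 0 ≤ s) (hsr : s ≤ r) (hrT : r ≤ T) :
    Mstar ω s ≤ Mstar ω r :=
  csSup_le ((nonempty_Icc.2 hs).image ω) <| forall_mem_image.2 fun _ hu =>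
    le_Mstar hω hrT ⟨hu.1, hu.2.trans hsr⟩

/-- Writing `Mstar ω s = sup_{u ∈ [0,1]} ωe (s u)` for a continuous extension `ωe` of `ω`
makes this a supremum over a fixed compact set of a jointly continuous function. -/
lemma continuousOn_Mstar (hT : 0 ≤ T) (hω : ContinuousOn ω (Icc 0 T)) :
    ContinuousOn (Mstar ω) (Icc 0 T) := by
  set ωe := IccExtend hT ((Icc 0 T).domRestrict ω)
  have hωe : Continuous ωe := continuous_IccExtend_iff.2 hω.domRestrict
  have hsup : EqOn (fun s => sSup ((fun u => ωe (s * u)) '' Icc 0 1)) (Mstar ω) (Icc 0 T) := by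
    intro s hs
    dsimp only
    rw [← image_image ωe (s * ·), image_mul_left_Icc hs.1 zero_le_one, mul_zero, mul_one, Mstar]
    exact congrArg sSup <| image_congr fun u hu =>
      IccExtend_of_mem hT _ (Icc_subset_Icc le_rfl hs.2 hu)
  exact (isCompact_Icc.continuous_sSup (hωe.comp continuous_mul)).continuousOn.congr hsup.symm

lemma drawdown_le_of_eqOn (hω' : ContinuousOn ω' (Icc 0 T)) (h : EqOn ω' ω (Icc 0 s))
    (hs : 0 ≤ s) (hsr : s ≤ r) (hrT : r ≤ T) (hbelow : ω' r ≤ ω s) :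
    Mstar ω s - ω s ≤ Mstar ω' r - ω' r := by
  have := Mstar_mono hω' hs hsr hrT
  rw [Mstar_congr h] at this
  linarith

end RunningMax

section SigmaStar

variable {T : ℝ} {ψ : ℝ → (ℝ → ℝ) → ℝ} {ω : ℝ → ℝ}

/-- `sigmaStar T ψ ω` is, by definition, `sInf (stopSet T ψ ω)`. -/
def stopSet (T : ℝ) (ψ : ℝ → (ℝ → ℝ) → ℝ) (ω : ℝ → ℝ) : Set ℝ :=
  {s ∈ Icc 0 T | ψ s ω ≤ Mstar ω s - ω s}

lemma bddBelow_stopSet : BddBelow (stopSet T ψ ω) := ⟨0, fun _ hs => hs.1.1⟩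

lemma right_mem_stopSet (hT : 0 ≤ T) (hω : ContinuousOn ω (Icc 0 T)) (hψT : ψ T ω = 0) :
    T ∈ stopSet T ψ ω :=
  ⟨right_mem_Icc.2 hT, by rw [hψT, sub_nonneg]; exact le_Mstar hω le_rfl (right_mem_Icc.2 hT)⟩

lemma isClosed_stopSet (hT : 0 ≤ T) (hω : ContinuousOn ω (Icc 0 T))
    (hψc : ContinuousOn (fun t => ψ t ω) (Icc 0 T)) : IsClosed (stopSet T ψ ω) :=
  isClosed_Icc.isClosed_le hψc ((continuousOn_Mstar hT hω).sub hω)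

lemma sigmaStar_mem_stopSet (hT : 0 ≤ T) (hω : ContinuousOn ω (Icc 0 T)) (hψT : ψ T ω = 0)
    (hψc : ContinuousOn (fun t => ψ t ω) (Icc 0 T)) : sigmaStar T ψ ω ∈ stopSet T ψ ω :=
  (isClosed_stopSet hT hω hψc).csInf_mem ⟨T, right_mem_stopSet hT hω hψT⟩ bddBelow_stopSet

lemma drawdown_lt_of_lt_sigmaStar {s : ℝ} (hs : s ∈ Icc 0 T) (hsσ : s < sigmaStar T ψ ω) :
    Mstar ω s - ω s < ψ s ω :=
  lt_of_not_ge fun h => notMem_of_lt_csInf hsσ bddBelow_stopSet ⟨hs, h⟩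

/-- The drawdown is below `ψ` on `[0, σ*)`, hence also at `σ*` by continuity, while `σ*` lies
in the closed stop set. -/
lemma drawdown_sigmaStar (hT : 0 ≤ T) (hω : ContinuousOn ω (Icc 0 T)) (hψT : ψ T ω = 0)
    (hψ0 : 0 ≤ ψ 0 ω) (hψc : ContinuousOn (fun t => ψ t ω) (Icc 0 T)) :
    Mstar ω (sigmaStar T ψ ω) - ω (sigmaStar T ψ ω) = ψ (sigmaStar T ψ ω) ω := by
  obtain ⟨⟨hσ0, hσT⟩, hstop⟩ := sigmaStar_mem_stopSet hT hω hψT hψc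
  refine le_antisymm ?_ hstop
  rcases hσ0.eq_or_lt with h0 | h0
  · rwa [← h0, Mstar_zero, sub_self]
  · have hcl : closure (Ico 0 (sigmaStar T ψ ω)) = Icc 0 (sigmaStar T ψ ω) := closure_Ico h0.ne
    have hsub : closure (Ico 0 (sigmaStar T ψ ω)) ⊆ Icc 0 T :=
      hcl ▸ Icc_subset_Icc le_rfl hσT
    refine le_on_closure
      (fun s hs => (drawdown_lt_of_lt_sigmaStar ⟨hs.1, hs.2.le.trans hσT⟩ hs.2).le)
      (((continuousOn_Mstar hT hω).sub hω).mono hsub) (hψc.mono hsub) ?_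
    exact hcl ▸ right_mem_Icc.2 hσ0

lemma regret_sigmaStar (hT : 0 ≤ T) (hω : ContinuousOn ω (Icc 0 T)) (hψT : ψ T ω = 0)
    (hψ0 : 0 ≤ ψ 0 ω) (hψc : ContinuousOn (fun t => ψ t ω) (Icc 0 T)) :
    regret ψ (sigmaStar T ψ) ω = ψ (sigmaStar T ψ ω) ω := by
  rw [regret, drawdown_sigmaStar hT hω hψT hψ0 hψc, max_self]

end SigmaStar

section Histories

variable {T t s : ℝ} {Ω : Set (ℝ → ℝ)} {ψ : ℝ → (ℝ → ℝ) → ℝ} {τ : (ℝ → ℝ) → ℝ} {ω ω' : ℝ → ℝ}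

lemma Hist_subset (hts : t ≤ s) (hω' : ω' ∈ Hist Ω t ω) : Hist Ω s ω' ⊆ Hist Ω t ω := fun _ h =>
  ⟨h.1, fun u hu => (h.2 u (Icc_subset_Icc le_rfl hts hu)).trans (hω'.2 u hu)⟩

lemma self_mem_Hist (hω : ω ∈ Ω) : ω ∈ Hist Ω t ω :=
  ⟨hω, fun _ _ => rfl⟩

lemma IsStoppingTime.lt_of_eqOn (hτ : IsStoppingTime T Ω τ) (hω : ω ∈ Ω) (hω' : ω' ∈ Ω)
    (hs : s ∈ Icc 0 T) (h : EqOn ω' ω (Icc 0 s)) (hsτ : s < τ ω) : s < τ ω' :=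
  lt_of_not_ge fun hτs =>
    hsτ.not_ge ((hτ.2 ω' hω' s hs hτs ω hω fun _ hu => (h hu).symm).trans_le hτs)

lemma le_sigmaStar_of_mem_Hist
    (hψh : ∀ s ∈ Icc 0 T, ∀ ω ∈ Ω, ∀ ω' ∈ Hist Ω s ω, ψ s ω' = ψ s ω)
    (hω : ω ∈ Ω) (hω' : ω' ∈ Hist Ω t ω) (hne : (stopSet T ψ ω').Nonempty)
    (hσ : t ≤ sigmaStar T ψ ω) : t ≤ sigmaStar T ψ ω' := by
  refine le_csInf hne fun s ⟨hs, hstop⟩ => le_of_not_gt fun hst => ?_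
  have h : EqOn ω' ω (Icc 0 s) := fun u hu => hω'.2 u ⟨hu.1, hu.2.trans hst.le⟩
  rw [hψh s hs ω hω ω' ⟨hω'.1, h⟩, Mstar_congr h, h (right_mem_Icc.2 hs.1)] at hstop
  exact notMem_of_lt_csInf (hst.trans_le hσ) bddBelow_stopSet ⟨hs, hstop⟩

lemma exists_mem_Hist_regret_sigmaStar_le (hT : 0 ≤ T) (hΩ : ∀ ω ∈ Ω, ContinuousOn ω (Icc 0 T))
    (hω : ω ∈ Ω) (hψT : ψ T ω = 0) (hψ0 : 0 ≤ ψ 0 ω)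
    (hψc : ContinuousOn (fun t => ψ t ω) (Icc 0 T))
    (hψa : AntitoneOn (fun t => ψ t ω) (Icc 0 T))
    (hreach : ∃ ωh ∈ Hist Ω (sigmaStar T ψ ω) ω,
      ∀ u, sigmaStar T ψ ω < u → u ≤ T → ωh u < ω (sigmaStar T ψ ω))
    (hτ : IsStoppingTime T Ω τ) :
    ∃ ω' ∈ Hist Ω (sigmaStar T ψ ω) ω, regret ψ (sigmaStar T ψ) ω ≤ regret ψ τ ω' := by
  have hσ : sigmaStar T ψ ω ∈ Icc 0 T := (sigmaStar_mem_stopSet hT (hΩ ω hω) hψT hψc).1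
  rw [regret_sigmaStar hT (hΩ ω hω) hψT hψ0 hψc]
  rcases le_or_gt (τ ω) (sigmaStar T ψ ω) with hle | hlt
  · exact ⟨ω, self_mem_Hist hω, (hψa (hτ.1 ω hω) hσ hle).trans (le_max_right _ _)⟩
  · obtain ⟨ωh, ⟨hωhΩ, hωh⟩, hbelow⟩ := hreach
    have hlt' : sigmaStar T ψ ω < τ ωh := hτ.lt_of_eqOn hω hωhΩ hσ hωh hlt
    refine ⟨ωh, ⟨hωhΩ, hωh⟩, le_trans ?_ (le_max_left _ _)⟩
    rw [← drawdown_sigmaStar hT (hΩ ω hω) hψT hψ0 hψc]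
    exact drawdown_le_of_eqOn (hΩ ωh hωhΩ) hωh hσ.1 hlt'.le (hτ.1 ωh hωhΩ).2
      (hbelow _ hlt' (hτ.1 ωh hωhΩ).2).le

lemma worstRegret_le_of_forall_exists {σ : (ℝ → ℝ) → ℝ}
    (h : ∀ ω' ∈ Hist Ω t ω, ∃ ω'' ∈ Hist Ω t ω, regret ψ σ ω' ≤ regret ψ τ ω'') :
    worstRegret Ω ψ t ω σ ≤ worstRegret Ω ψ t ω τ :=
  iSup₂_le fun ω' hω' =>
    let ⟨ω'', hω'', hle⟩ := h ω' hω'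
    le_iSup₂_of_le ω'' hω'' (ENNReal.ofReal_le_ofReal hle)

end Histories

theorem stmt6_general (T : ℝ) (Ω : Set (ℝ → ℝ))
    (hΩ : ∀ ω ∈ Ω, ContinuousOn ω (Set.Icc 0 T))
    (ψ : ℝ → (ℝ → ℝ) → ℝ)
    (hψT : ∀ ω ∈ Ω, ψ T ω = 0)
    (hψnn : ∀ ω ∈ Ω, ∀ t ∈ Set.Icc 0 T, 0 ≤ ψ t ω)
    (hψc : ∀ ω ∈ Ω, ContinuousOn (fun t => ψ t ω) (Set.Icc 0 T))
    (hψa : ∀ ω ∈ Ω, StrictAntiOn (fun t => ψ t ω) (Set.Icc 0 T))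
    (hψh : ∀ t ∈ Set.Icc 0 T, ∀ ω ∈ Ω, ∀ ω' ∈ Hist Ω t ω, ψ t ω' = ψ t ω)
    (hreach : ∀ t ∈ Set.Icc 0 T, ∀ ω ∈ Ω,
      ∃ ωh ∈ Hist Ω t ω, ∀ u, t < u → u ≤ T → ωh u < ω t)
    (t : ℝ) (ht : t ∈ Set.Icc 0 T) (ω : ℝ → ℝ) (hω : ω ∈ Ω)
    (hσ : t ≤ sigmaStar T ψ ω)
    (τ : (ℝ → ℝ) → ℝ) (hτ : IsStoppingTime T Ω τ) :
    worstRegret Ω ψ t ω (sigmaStar T ψ) ≤ worstRegret Ω ψ t ω τ := by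
  have hT : 0 ≤ T := ht.1.trans ht.2
  refine worstRegret_le_of_forall_exists fun ω' hω' => ?_
  have hω'Ω : ω' ∈ Ω := hω'.1
  have hσ' : t ≤ sigmaStar T ψ ω' := le_sigmaStar_of_mem_Hist hψh hω hω'
    ⟨T, right_mem_stopSet hT (hΩ ω' hω'Ω) (hψT ω' hω'Ω)⟩ hσ
  have hσ'T : sigmaStar T ψ ω' ∈ Icc 0 T :=
    (sigmaStar_mem_stopSet hT (hΩ ω' hω'Ω) (hψT ω' hω'Ω) (hψc ω' hω'Ω)).1
  obtain ⟨ω'', hω'', hle⟩ := exists_mem_Hist_regret_sigmaStar_le hT hΩ hω'Ω (hψT ω' hω'Ω)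
    (hψnn ω' hω'Ω 0 (left_mem_Icc.2 hT)) (hψc ω' hω'Ω) (hψa ω' hω'Ω).antitoneOn
    (hreach _ hσ'T ω' hω'Ω) hτ
  exact ⟨ω'', Hist_subset hσ' hω' hω'', hle⟩

/-- under the reaching assumption, for every `(t,ω)` with
`σ*(ω) ≥ t`, the stopping time `σ*` is optimal with respect to `𝒜(t,ω)`:
`ℛ(t,ω;σ*) ≤ ℛ(t,ω;τ)` for every stopping time `τ` admissible for `𝒜(t,ω)`. -/
theorem stmt6 (T : ℝ) (hT : 0 < T) (Ω : Set (ℝ → ℝ))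
    (hΩ : ∀ ω ∈ Ω, ContinuousOn ω (Set.Icc 0 T))
    (ψ : ℝ → (ℝ → ℝ) → ℝ)
    (hψT : ∀ ω ∈ Ω, ψ T ω = 0)
    (hψnn : ∀ ω ∈ Ω, ∀ t ∈ Set.Icc 0 T, 0 ≤ ψ t ω)
    (hψc : ∀ ω ∈ Ω, ContinuousOn (fun t => ψ t ω) (Set.Icc 0 T))
    (hψa : ∀ ω ∈ Ω, StrictAntiOn (fun t => ψ t ω) (Set.Icc 0 T))
    (hψh : ∀ t ∈ Set.Icc 0 T, ∀ ω ∈ Ω, ∀ ω' ∈ Hist Ω t ω, ψ t ω' = ψ t ω)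
    (hreach : ∀ t ∈ Set.Icc 0 T, ∀ ω ∈ Ω,
      ∃ ωh ∈ Hist Ω t ω, ∀ u, t < u → u ≤ T → ωh u < ω t)
    (t : ℝ) (ht : t ∈ Set.Icc 0 T) (ω : ℝ → ℝ) (hω : ω ∈ Ω)
    (hσ : t ≤ sigmaStar T ψ ω)
    (τ : (ℝ → ℝ) → ℝ) (hτ : IsStoppingTime T Ω τ)
    (hadm : ∀ ω'' ∈ Hist Ω t ω, t ≤ τ ω'') :
    worstRegret Ω ψ t ω (sigmaStar T ψ) ≤ worstRegret Ω ψ t ω τ :=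
  stmt6_general T Ω hΩ ψ hψT hψnn hψc hψa hψh hreach t ht ω hω hσ τ hτ

end SellingRegret

end
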